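/- arXiv:1012.5744 — 6 statements merged into one kernel-verified Lean document; each statement's English description precedes it below -/
import Mathlib

section
/- For every integer k ≥ 0 and every n ≥ 0, the Hankel-type determinants satisfy H_{k+1}(ΔS_n)·H_k(Δ^m S_{n+1}) = H_k(Δ^{m+1} S_n)·H_{k+1}(S_{n+1}) − H_k(Δ^{m+1} S_{n+1})·H_{k+1}(S_n). -/
/-- Forward difference operator: `(fd u) n = u (n+1) - u n`.
Iterated differences are `fd^[i] u`. -/
def fd (u : ℕ → ℝ) : ℕ → ℝ := fun n => u (n + 1) - u n

/-- Hankel-type determinant `H_k(u_n)` (depending on the fixed integer `m`):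
the determinant of the `k × k` matrix whose `(i,j)` entry is `Δ^{i·m} u_{n+j}`.
By convention `H_k = 0` for `k < 0`, and `H_0 = 1` (empty determinant). -/
noncomputable def Hd (m : ℕ) (u : ℕ → ℝ) (k : ℤ) (n : ℕ) : ℝ :=
  if k < 0 then 0
  else Matrix.det (Matrix.of fun i j : Fin k.toNat => fd^[i.val * m] u (n + j.val))

/-! Put `u j i = Δ^{im} S_{n+j}`. Transposed, each of the six determinants is a determinant of
the array `u` or of its row differences `u (j + 1) i - u j i`, shifted by at most one row and one
column. Up to sign, all six are minors of the `(k + 2) × (k + 2)` matrix whose first column is all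
ones and whose other columns are `u · 0, …, u · k` (subtracting consecutive rows turns the ones
column into a unit vector), and the identity is the Desnanot–Jacobi identity for that matrix along
its first and last rows and its first two columns. -/

namespace Matrix

variable {n R : Type*} [Fintype n] [DecidableEq n] [CommRing R]

theorem det_updateRow_finset_sum (A : Matrix n n R) (j : n) {ι : Type*} (s : Finset ι)
    (g : ι → n → R) : det (A.updateRow j (∑ a ∈ s, g a)) = ∑ a ∈ s, det (A.updateRow j (g a)) :=
  detRowAlternating.map_update_sum s j g A

theorem det_updateRow_updateRow_swap (A : Matrix n n R) {j₁ j₂ : n} (hj : j₁ ≠ j₂) (x y : n → R) :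
    det ((A.updateRow j₁ x).updateRow j₂ y) = -det ((A.updateRow j₁ y).updateRow j₂ x) := by
  have hperm : (A.updateRow j₁ x).updateRow j₂ y =
      ((A.updateRow j₁ y).updateRow j₂ x).submatrix (Equiv.swap j₁ j₂) id := by
    ext i k
    rcases eq_or_ne i j₁ with rfl | h₁
    · simp [hj]
    rcases eq_or_ne i j₂ with rfl | h₂
    · simp [hj]
    · simp [Equiv.swap_apply_of_ne_of_ne h₁ h₂, h₁, h₂]
  rw [hperm, det_permute, Equiv.Perm.sign_swap hj]
  simp

/-- The Desnanot–Jacobi identity, with the four complementary minors written as adjugate entries. -/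
theorem det_mul_det_updateRow_updateRow_single (A : Matrix n n R) {j₁ j₂ : n} (hj : j₁ ≠ j₂)
    (i₁ i₂ : n) :
    det A * det ((A.updateRow j₁ (Pi.single i₁ 1)).updateRow j₂ (Pi.single i₂ 1)) =
      adjugate A i₁ j₁ * adjugate A i₂ j₂ - adjugate A i₂ j₁ * adjugate A i₁ j₂ := by
  set B := A.updateRow j₁ (Pi.single i₁ 1)
  -- Row `i₂` of `adjugate A * A`; put into row `j₂` of `B`, only the rows `A j₁`, `A j₂` survive.
  have hrow : det A • (Pi.single i₂ 1 : n → R) = ∑ p, adjugate A i₂ p • A p := by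
    ext c
    simpa [mul_apply, one_apply, Pi.single_apply, eq_comm] using
      (congr_fun₂ (adjugate_mul A) i₂ c).symm
  have hB : B.updateRow j₂ (A j₂) = B := by
    rw [show A j₂ = B j₂ by simp [B, hj.symm], updateRow_eq_self]
  calc det A * det (B.updateRow j₂ (Pi.single i₂ 1))
      = ∑ p, adjugate A i₂ p * det (B.updateRow j₂ (A p)) := by
        rw [← det_updateRow_smul, hrow, det_updateRow_finset_sum]
        simp only [det_updateRow_smul]
    _ = adjugate A i₂ j₁ * det (B.updateRow j₂ (A j₁))
          + adjugate A i₂ j₂ * det (B.updateRow j₂ (A j₂)) := by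
        refine Fintype.sum_eq_add _ _ hj fun p ⟨hp₁, hp₂⟩ => ?_
        rw [det_zero_of_row_eq hp₂ (by simp [B, hp₁, hp₂]), mul_zero]
    _ = _ := by
        rw [det_updateRow_updateRow_swap _ hj, updateRow_eq_self, hB]
        simp only [B, adjugate_apply]
        ring

theorem det_of_vecCons_one {N : ℕ} (v : Fin (N + 1) → Fin N → R) :
    det (of fun j => vecCons 1 (v j)) = det (of fun j i => v j.succ i - v j.castSucc i) := by
  let B : Matrix (Fin (N + 1)) (Fin (N + 1)) R := of fun j =>
    Fin.cases (vecCons 1 (v 0)) (fun j => vecCons 0 fun i => v j.succ i - v j.castSucc i) j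
  have hB : det (of fun j => vecCons 1 (v j)) = det B := by
    refine det_eq_of_forall_row_eq_smul_add_pred (fun _ => 1) (fun i => by simp [B]) fun j i => ?_
    refine Fin.cases ?_ (fun i => ?_) i <;> simp [B]
  rw [hB, det_succ_column_zero, Fintype.sum_eq_single 0 fun j hj => ?_]
  · simp [B]
    rfl
  · obtain ⟨j, rfl⟩ := Fin.exists_succ_eq.mpr hj
    simp [B]

theorem det_rowDiff_condensation (u : ℕ → ℕ → R) (k : ℕ) :
    det (of fun j i : Fin (k + 1) => u (j + 1) i - u j i) *
        det (of fun j i : Fin k => u (j + 1) (i + 1)) =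
      det (of fun j i : Fin k => u (j + 1) (i + 1) - u j (i + 1)) *
          det (of fun j i : Fin (k + 1) => u (j + 1) i) -
        det (of fun j i : Fin k => u (j + 2) (i + 1) - u (j + 1) (i + 1)) *
          det (of fun j i : Fin (k + 1) => u j i) := by
  let M : Matrix (Fin (k + 2)) (Fin (k + 2)) R := of fun j => vecCons 1 fun i => u j i
  have hM : det M = det (of fun j i : Fin (k + 1) => u (j + 1) i - u j i) := by
    rw [det_of_vecCons_one]
    rfl
  have h00 : adjugate M 0 0 = det (of fun j i : Fin (k + 1) => u (j + 1) i) := by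
    rw [adjugate_fin_succ_eq_det_submatrix]
    simp [M]
    rfl
  have h0l : adjugate M 0 (Fin.last _) =
      (-1) ^ (k + 1) * det (of fun j i : Fin (k + 1) => u j i) := by
    rw [adjugate_fin_succ_eq_det_submatrix]
    simp [M]
    rfl
  have hcol (f : Fin (k + 1) → Fin (k + 2)) :
      M.submatrix f (Fin.succAbove 1) = of fun j => vecCons 1 fun i : Fin k => u (f j) (i + 1) := by
    ext j i
    refine Fin.cases ?_ (fun i => ?_) i <;> simp [M]
  have h10 : adjugate M 1 0 =
      -det (of fun j i : Fin k => u (j + 2) (i + 1) - u (j + 1) (i + 1)) := by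
    rw [adjugate_fin_succ_eq_det_submatrix, hcol, det_of_vecCons_one]
    simp
  have h1l : adjugate M 1 (Fin.last _) =
      (-1) ^ k * det (of fun j i : Fin k => u (j + 1) (i + 1) - u j (i + 1)) := by
    rw [adjugate_fin_succ_eq_det_submatrix, hcol, det_of_vecCons_one]
    simp [pow_succ]
  have hinner : det ((M.updateRow 0 (Pi.single 0 1)).updateRow (Fin.last _) (Pi.single 1 1)) =
      (-1) ^ k * det (of fun j i : Fin k => u (j + 1) (i + 1)) := by
    rw [← adjugate_apply, adjugate_fin_succ_eq_det_submatrix, det_succ_row_zero,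
      Fintype.sum_eq_single 0 fun i hi => ?_]
    · have hsub : ((M.updateRow 0 (Pi.single 0 1)).submatrix (Fin.last _).succAbove
          (Fin.succAbove 1)).submatrix Fin.succ (Fin.succAbove 0) =
          of fun j i : Fin k => u (j + 1) (i + 1) := by
        ext j i
        simp [M, updateRow_apply, Fin.ext_iff]
      rw [hsub]
      simp [pow_succ]
    · obtain ⟨i, rfl⟩ := Fin.exists_succ_eq.mpr hi
      simp
  have key :=
    det_mul_det_updateRow_updateRow_single M (Fin.last_pos.ne : (0 : Fin (k + 2)) ≠ _) 0 1
  rw [hM, hinner, h00, h0l, h10, h1l, pow_succ] at key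
  refine ((isUnit_neg_one (α := R)).pow k).mul_left_cancel ?_
  linear_combination key

end Matrix

open Matrix

theorem Hd_natCast (m : ℕ) (u : ℕ → ℝ) (K n : ℕ) :
    Hd m u K n = det (of fun j i : Fin K => fd^[i * m] u (n + j)) := by
  rw [Hd, if_neg (by omega), ← det_transpose]
  rfl

theorem iterate_fd_succ_apply (a : ℕ) (u : ℕ → ℝ) (x : ℕ) :
    fd^[a + 1] u x = fd^[a] u (x + 1) - fd^[a] u x := by
  rw [Function.iterate_succ_apply']
  rfl

theorem stmt_0_general (m : ℕ) (S : ℕ → ℝ) (k n : ℕ) :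
    Hd m (fd^[1] S) ((k : ℤ) + 1) n * Hd m (fd^[m] S) (k : ℤ) (n + 1) =
      Hd m (fd^[m + 1] S) (k : ℤ) n * Hd m S ((k : ℤ) + 1) (n + 1) -
        Hd m (fd^[m + 1] S) (k : ℤ) (n + 1) * Hd m S ((k : ℤ) + 1) n := by
  rw [← Nat.cast_succ]
  simp only [Hd_natCast, ← Function.iterate_add_apply]
  convert det_rowDiff_condensation (fun j i => fd^[i * m] S (n + j)) k using 4 <;>
    ext j i <;>
    simp only [of_apply, add_mul, one_mul, ← add_assoc, iterate_fd_succ_apply, add_right_comm n 1]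

/-- Lemma 1: `H_{k+1}(ΔS_n) H_k(Δ^m S_{n+1}) = H_k(Δ^{m+1}S_n) H_{k+1}(S_{n+1})
− H_k(Δ^{m+1}S_{n+1}) H_{k+1}(S_n)` for all `k, n ≥ 0`. -/
theorem stmt_0 (m : ℕ) (hm : 1 ≤ m) (S : ℕ → ℝ) (k n : ℕ) :
    Hd m (fd^[1] S) ((k : ℤ) + 1) n * Hd m (fd^[m] S) (k : ℤ) (n + 1) =
      Hd m (fd^[m + 1] S) (k : ℤ) n * Hd m S ((k : ℤ) + 1) (n + 1) -
        Hd m (fd^[m + 1] S) (k : ℤ) (n + 1) * Hd m S ((k : ℤ) + 1) n :=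
  stmt_0_general m S k n
end

section
/- For all integers i ≥ 0, k ≥ 1 and n ≥ 0, H_k(Δ^{i+1} S_n)·H_{k−1}(Δ^i S_{n+1}) = H_{k−1}(Δ^{i+1} S_n)·H_k(Δ^i S_{n+1}) − H_{k−1}(Δ^{i+1} S_{n+1})·H_k(Δ^i S_n). -/
noncomputable def finCornersSumInteriorEquiv (n : ℕ) : Fin 2 ⊕ Fin n ≃ Fin (n + 2) :=
  Equiv.ofBijective (Sum.elim ![0, Fin.last (n + 1)] (Fin.succ ∘ Fin.castSucc)) <| by
    refine (Fintype.bijective_iff_injective_and_card _).mpr ⟨?_, by simp [add_comm]⟩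
    refine Function.Injective.sumElim ?_ ((Fin.succ_injective _).comp (Fin.castSucc_injective _))
      fun a b => ?_
    · intro a b
      fin_cases a <;> fin_cases b <;> simp [Fin.ext_iff]
    · fin_cases a
      · exact (Fin.succ_ne_zero _).symm
      · simp [Fin.ext_iff]
        omega

namespace Matrix

variable {R : Type*} [CommRing R]

section Blocks

variable {m n : Type*} [Fintype m] [Fintype n] [DecidableEq m] [DecidableEq n]

theorem det_mul_det_adjugate_toBlocks₁₁ (A : Matrix (m ⊕ n) (m ⊕ n) R) :
    A.det * A.adjugate.toBlocks₁₁.det = A.det ^ Fintype.card m * A.toBlocks₂₂.det := by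
  have hprod : A * fromBlocks A.adjugate.toBlocks₁₁ 0 A.adjugate.toBlocks₂₁ 1 =
      fromBlocks (A.det • 1) A.toBlocks₁₂ 0 A.toBlocks₂₂ := by
    have h := mul_adjugate A
    generalize A.adjugate = B at h ⊢
    generalize A.det = d at h ⊢
    rw [← fromBlocks_toBlocks A, ← fromBlocks_toBlocks B, fromBlocks_multiply,
      ← fromBlocks_one, fromBlocks_smul] at h
    obtain ⟨h₁₁, -, h₂₁, -⟩ := fromBlocks_inj.mp h
    conv_lhs => rw [← fromBlocks_toBlocks A, fromBlocks_multiply]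
    simp [h₁₁, h₂₁]
  simpa [det_fromBlocks_zero₁₂, det_fromBlocks_zero₂₁] using congrArg det hprod

theorem det_adjugate_toBlocks₁₁ [Nonempty m] (A : Matrix (m ⊕ n) (m ⊕ n) R) :
    A.adjugate.toBlocks₁₁.det = A.det ^ (Fintype.card m - 1) * A.toBlocks₂₂.det := by
  let X := mvPolynomialX (m ⊕ n) (m ⊕ n) ℤ
  have generic :
      X.adjugate.toBlocks₁₁.det = X.det ^ (Fintype.card m - 1) * X.toBlocks₂₂.det := by
    apply mul_left_cancel₀ (det_mvPolynomialX_ne_zero (m ⊕ n) ℤ)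
    rw [det_mul_det_adjugate_toBlocks₁₁, ← mul_assoc, ← pow_succ',
      Nat.sub_add_cancel Fintype.card_pos]
  let f := MvPolynomial.eval₂Hom (Int.castRingHom R) fun p : (m ⊕ n) × (m ⊕ n) => A p.1 p.2
  have hX : f.mapMatrix X = A := mvPolynomialX_map_eval₂ _ A
  have h := congrArg f generic
  rw [map_mul, map_pow, RingHom.map_det, RingHom.map_det, RingHom.map_det, hX] at h
  convert h using 2
  · rw [← hX, ← RingHom.map_adjugate]
    rfl
  · rw [← hX]
    rfl

end Blocks

theorem desnanot_jacobi {n : ℕ} (A : Matrix (Fin (n + 2)) (Fin (n + 2)) R) :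
    A.det * (A.submatrix (Fin.succ ∘ Fin.castSucc) (Fin.succ ∘ Fin.castSucc)).det =
      (A.submatrix Fin.succ Fin.succ).det * (A.submatrix Fin.castSucc Fin.castSucc).det -
        (A.submatrix Fin.succ Fin.castSucc).det * (A.submatrix Fin.castSucc Fin.succ).det := by
  let e := finCornersSumInteriorEquiv n
  have h := det_adjugate_toBlocks₁₁ (A.submatrix e e)
  rw [det_fin_two, adjugate_submatrix_equiv_self, det_submatrix_equiv_self] at h
  change A.adjugate 0 0 * A.adjugate (Fin.last _) (Fin.last _) -
      A.adjugate 0 (Fin.last _) * A.adjugate (Fin.last _) 0 =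
    A.det ^ 1 * (A.submatrix (Fin.succ ∘ Fin.castSucc) (Fin.succ ∘ Fin.castSucc)).det at h
  simp only [adjugate_fin_succ_eq_det_submatrix, Fin.succAbove_zero, Fin.succAbove_last,
    Fin.val_zero, Fin.val_last, add_zero, zero_add, pow_zero, one_mul, pow_add, pow_one] at h
  have hsign : (-1 : R) ^ (n + 1) * (-1) ^ (n + 1) = 1 := by
    rw [← mul_pow, neg_one_mul, neg_neg, one_pow]
  linear_combination -h +
    ((A.submatrix Fin.succ Fin.succ).det * (A.submatrix Fin.castSucc Fin.castSucc).det -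
      (A.submatrix Fin.succ Fin.castSucc).det * (A.submatrix Fin.castSucc Fin.succ).det) * hsign

theorem det_eq_det_colDiff_of_row_zero_eq_one {k : ℕ} (A : Matrix (Fin (k + 1)) (Fin (k + 1)) R)
    (hA : ∀ j, A 0 j = 1) :
    A.det = (of fun i j : Fin k => A i.succ j.succ - A i.succ j.castSucc).det := by
  let D : Matrix (Fin (k + 1)) (Fin (k + 1)) R :=
    of fun i j => Fin.cases (A i 0) (fun j' => A i j'.succ - A i j'.castSucc) j
  have hD : A.det = D.det :=
    det_eq_of_forall_col_eq_smul_add_pred (fun _ => 1) (fun _ => rfl) fun i j => by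
      simp only [D, of_apply, Fin.cases_succ, one_mul, sub_add_cancel]
  rw [hD, det_succ_row_zero, Fintype.sum_eq_single 0 fun j hj => ?_]
  · simp only [D, of_apply, Fin.cases_zero, hA, Fin.val_zero, pow_zero, one_mul,
      Fin.succAbove_zero]
    rfl
  · obtain ⟨j, rfl⟩ := Fin.exists_succ_eq.mpr hj
    simp only [D, of_apply, Fin.cases_succ, hA, sub_self, mul_zero, zero_mul]

end Matrix

open Matrix

def diffHankel (m : ℕ) (u : ℕ → ℝ) (k n : ℕ) : Matrix (Fin k) (Fin k) ℝ :=
  of fun i j => fd^[(i : ℕ) * m] u (n + (j : ℕ))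

def borderedDiffHankel (m : ℕ) (u : ℕ → ℝ) (k n : ℕ) : Matrix (Fin (k + 1)) (Fin (k + 1)) ℝ :=
  of fun i j => if (i : ℕ) = 0 then 1 else fd^[((i : ℕ) - 1) * m] u (n + (j : ℕ))

theorem Hd_natCast_s2 (m : ℕ) (u : ℕ → ℝ) (k n : ℕ) : Hd m u k n = (diffHankel m u k n).det := by
  simp [Hd, diffHankel]

section

variable (m : ℕ) (u : ℕ → ℝ) (k n : ℕ)

theorem det_borderedDiffHankel :
    (borderedDiffHankel m u k n).det = (diffHankel m (fd u) k n).det := by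
  rw [det_eq_det_colDiff_of_row_zero_eq_one _ fun _ => by simp [borderedDiffHankel]]
  congr 1
  ext i j
  simp only [borderedDiffHankel, diffHankel, of_apply, Fin.val_succ, Fin.val_castSucc,
    Nat.succ_ne_zero, if_false, Nat.add_sub_cancel]
  rw [← Function.iterate_succ_apply, Function.iterate_succ_apply']
  rfl

theorem borderedDiffHankel_submatrix_succ_succ :
    (borderedDiffHankel m u k n).submatrix Fin.succ Fin.succ = diffHankel m u k (n + 1) := by
  ext i j
  simp [borderedDiffHankel, diffHankel, add_assoc, add_comm 1]

theorem borderedDiffHankel_submatrix_succ_castSucc :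
    (borderedDiffHankel m u k n).submatrix Fin.succ Fin.castSucc = diffHankel m u k n := by
  ext i j
  simp [borderedDiffHankel, diffHankel]

theorem borderedDiffHankel_submatrix_castSucc_castSucc :
    (borderedDiffHankel m u (k + 1) n).submatrix Fin.castSucc Fin.castSucc =
      borderedDiffHankel m u k n :=
  rfl

theorem borderedDiffHankel_submatrix_castSucc_succ :
    (borderedDiffHankel m u (k + 1) n).submatrix Fin.castSucc Fin.succ =
      borderedDiffHankel m u k (n + 1) := by
  ext i j
  simp [borderedDiffHankel, add_assoc, add_comm 1]

theorem borderedDiffHankel_submatrix_interior :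
    (borderedDiffHankel m u (k + 1) n).submatrix (Fin.succ ∘ Fin.castSucc)
      (Fin.succ ∘ Fin.castSucc) = diffHankel m u k (n + 1) := by
  ext i j
  simp [borderedDiffHankel, diffHankel, add_assoc, add_comm 1]

theorem det_diffHankel_fd_mul_det_diffHankel :
    (diffHankel m (fd u) (k + 1) n).det * (diffHankel m u k (n + 1)).det =
      (diffHankel m (fd u) k n).det * (diffHankel m u (k + 1) (n + 1)).det -
        (diffHankel m (fd u) k (n + 1)).det * (diffHankel m u (k + 1) n).det := by
  have h := desnanot_jacobi (borderedDiffHankel m u (k + 1) n)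
  rw [borderedDiffHankel_submatrix_interior, borderedDiffHankel_submatrix_succ_succ,
    borderedDiffHankel_submatrix_castSucc_castSucc, borderedDiffHankel_submatrix_succ_castSucc,
    borderedDiffHankel_submatrix_castSucc_succ, det_borderedDiffHankel, det_borderedDiffHankel,
    det_borderedDiffHankel] at h
  linear_combination h

end

theorem stmt_2_general (m : ℕ) (S : ℕ → ℝ) (i k n : ℕ) (hk : 1 ≤ k) :
    Hd m (fd^[i + 1] S) (k : ℤ) n * Hd m (fd^[i] S) ((k : ℤ) - 1) (n + 1) =
      Hd m (fd^[i + 1] S) ((k : ℤ) - 1) n * Hd m (fd^[i] S) (k : ℤ) (n + 1) -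
        Hd m (fd^[i + 1] S) ((k : ℤ) - 1) (n + 1) * Hd m (fd^[i] S) (k : ℤ) n := by
  obtain ⟨k, rfl⟩ := Nat.exists_eq_add_of_le' hk
  rw [Function.iterate_succ_apply', Nat.cast_succ, add_sub_cancel_right]
  simp only [Hd_natCast_s2]
  exact det_diffHankel_fd_mul_det_diffHankel m (fd^[i] S) k n

/-- Lemma 2: for `i ≥ 0`, `k ≥ 1`, `n ≥ 0`: `H_k(Δ^{i+1}S_n) H_{k−1}(Δ^i S_{n+1})
= H_{k−1}(Δ^{i+1}S_n) H_k(Δ^i S_{n+1}) − H_{k−1}(Δ^{i+1}S_{n+1}) H_k(Δ^i S_n)`. -/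
theorem stmt_2 (m : ℕ) (hm : 1 ≤ m) (S : ℕ → ℝ) (i k n : ℕ) (hk : 1 ≤ k) :
    Hd m (fd^[i + 1] S) (k : ℤ) n * Hd m (fd^[i] S) ((k : ℤ) - 1) (n + 1) =
      Hd m (fd^[i + 1] S) ((k : ℤ) - 1) n * Hd m (fd^[i] S) (k : ℤ) (n + 1) -
        Hd m (fd^[i + 1] S) ((k : ℤ) - 1) (n + 1) * Hd m (fd^[i] S) (k : ℤ) n :=
  stmt_2_general m S i k n hk
end

section
/- For all integers i ≥ 0, k ≥ 0 and n ≥ 0, H_k(Δ^{i+2} S_n)·H_k(Δ^i S_{n+1}) = H_k(Δ^{i+1} S_n)·Φ_{k+1}(Δ^i S_{n+1}) − H_k(Δ^{i+1} S_{n+1})·Φ_{k+1}(Δ^i S_n). -/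
/-- Determinant `Φ_k(u_n)`: the `k × k` determinant whose first row is
`(n, n+1, …, n+k−1)` and whose `i`-th row (`1 ≤ i ≤ k−1`) is
`(Δ^{(i−1)m} u_n, …, Δ^{(i−1)m} u_{n+k−1})`. `Φ_0 = 1` (empty determinant). -/
noncomputable def Phi (m : ℕ) (u : ℕ → ℝ) (k : ℕ) (n : ℕ) : ℝ :=
  Matrix.det (Matrix.of fun i j : Fin k =>
    if i.val = 0 then ((n + j.val : ℕ) : ℝ) else fd^[(i.val - 1) * m] u (n + j.val))


/-!
Write `u` for `Δ^i S` and let `M` be the `(k+2) × (k+2)` Casorati matrix `(f_a(n + b))` of the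
sequences `1, t, u, Δ^m u, …, Δ^{(k-1)m} u`. A top row of ones can be removed by differencing
neighbouring columns, which turns the remaining rows into their differences (and `t` into `1`).
Hence `det M = H_k(Δ²u_n)`, and the minors of `M` obtained by deleting one of the two top rows and
the first or the last column are `Φ_{k+1}(u_{n+1})`, `Φ_{k+1}(u_n)`, `H_k(Δu_n)` and
`H_k(Δu_{n+1})`, while deleting both top rows and both extreme columns leaves `H_k(u_{n+1})`.
The identity is the Desnanot–Jacobi identity for `M`. That identity is Jacobi's theorem on the
`2 × 2` minors of the adjugate, which comes from `det (M * N) = det M * det N` for `N` the identity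
matrix with two columns replaced by columns of `adj M`, once `det M` may be cancelled: this is the
case for the generic matrix over `ℤ[X_ij]`, which specialises to any matrix.
-/

namespace Matrix

variable {n R : Type*} [Fintype n] [DecidableEq n] [CommRing R]

theorem det_one_updateCol_updateCol {j₁ j₂ : n} (h : j₁ ≠ j₂) (c₁ c₂ : n → R) :
    (((1 : Matrix n n R).updateCol j₁ c₁).updateCol j₂ c₂).det =
      c₁ j₁ * c₂ j₂ - c₁ j₂ * c₂ j₁ := by
  set U : Matrix n (Fin 2) R :=
    of fun p => ![c₁ p - (1 : Matrix n n R) p j₁, c₂ p - (1 : Matrix n n R) p j₂]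
  set V : Matrix (Fin 2) n R := of ![(1 : Matrix n n R) j₁, (1 : Matrix n n R) j₂]
  have hUV : ((1 : Matrix n n R).updateCol j₁ c₁).updateCol j₂ c₂ = 1 + U * V := by
    ext p q
    simp only [updateCol_apply, add_apply, mul_apply, Fin.sum_univ_two, U, V, of_apply,
      one_apply, cons_val_zero, cons_val_one]
    grind
  have hVU : 1 + V * U = !![c₁ j₁, c₂ j₁; c₁ j₂, c₂ j₂] := by
    ext a b
    fin_cases a <;> fin_cases b <;> simp [U, V, vecMul, dotProduct, one_apply, h, h.symm]
  rw [hUV, det_one_add_mul_comm, hVU, det_fin_two_of]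
  ring

theorem det_mul_adjugate_minor_two (M : Matrix n n R) {j₁ j₂ : n} (h : j₁ ≠ j₂) (i₁ i₂ : n) :
    M.det * (adjugate M j₁ i₁ * adjugate M j₂ i₂ - adjugate M j₁ i₂ * adjugate M j₂ i₁) =
      M.det ^ 2 * ((M.updateCol j₁ (Pi.single i₁ 1)).updateCol j₂ (Pi.single i₂ 1)).det := by
  have hcol : ∀ i, M *ᵥ (adjugate M *ᵥ Pi.single i 1) = M.det • Pi.single i 1 := fun i => by
    rw [mulVec_mulVec, mul_adjugate, smul_mulVec, one_mulVec]
  calc M.det * (adjugate M j₁ i₁ * adjugate M j₂ i₂ - adjugate M j₁ i₂ * adjugate M j₂ i₁)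
      = (M * ((1 : Matrix n n R).updateCol j₁ (adjugate M *ᵥ Pi.single i₁ 1)).updateCol j₂
          (adjugate M *ᵥ Pi.single i₂ 1)).det := by
        simp only [det_mul, det_one_updateCol_updateCol h, mulVec_single_one, col_apply]
        ring
    _ = ((M.updateCol j₁ (M.det • Pi.single i₁ 1)).updateCol j₂
          (M.det • Pi.single i₂ 1)).det := by
        rw [mul_updateCol, mul_updateCol, mul_one, hcol, hcol]
    _ = _ := by
        rw [det_updateCol_smul, updateCol_comm _ h, det_updateCol_smul, updateCol_comm _ h.symm]
        ring

theorem adjugate_minor_two (M : Matrix n n R) {j₁ j₂ : n} (h : j₁ ≠ j₂) (i₁ i₂ : n) :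
    adjugate M j₁ i₁ * adjugate M j₂ i₂ - adjugate M j₁ i₂ * adjugate M j₂ i₁ =
      M.det * ((M.updateCol j₁ (Pi.single i₁ 1)).updateCol j₂ (Pi.single i₂ 1)).det := by
  let X := mvPolynomialX n n ℤ
  have hX : adjugate X j₁ i₁ * adjugate X j₂ i₂ - adjugate X j₁ i₂ * adjugate X j₂ i₁ =
      X.det * ((X.updateCol j₁ (Pi.single i₁ 1)).updateCol j₂ (Pi.single i₂ 1)).det := by
    apply mul_left_cancel₀ (det_mvPolynomialX_ne_zero n ℤ)
    rw [det_mul_adjugate_minor_two X h]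
    ring
  set f := MvPolynomial.aeval (R := ℤ) fun p : n × n => M p.1 p.2
  have hfX : f.mapMatrix X = M := mvPolynomialX_mapMatrix_aeval ℤ M
  have hupdate : ∀ (Y : Matrix n n (MvPolynomial (n × n) ℤ)) j i,
      f.mapMatrix (Y.updateCol j (Pi.single i 1)) =
        (f.mapMatrix Y).updateCol j (Pi.single i 1) := by
    intro Y j i
    ext p q
    simp only [AlgHom.mapMatrix_apply, map_apply, updateCol_apply, Pi.single_apply]
    split_ifs <;> simp
  rw [← hfX, ← hupdate, ← hupdate, ← AlgHom.map_adjugate]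
  simpa only [map_sub, map_mul, AlgHom.map_det, AlgHom.mapMatrix_apply, map_apply]
    using congrArg f hX

theorem det_updateCol_single_one {r : ℕ} (X : Matrix (Fin (r + 1)) (Fin (r + 1)) R)
    (i j : Fin (r + 1)) :
    (X.updateCol j (Pi.single i 1)).det =
      (-1) ^ (i + j : ℕ) * (X.submatrix i.succAbove j.succAbove).det := by
  rw [← det_transpose, ← updateRow_transpose, ← adjugate_apply,
    adjugate_fin_succ_eq_det_submatrix, ← transpose_submatrix, det_transpose, add_comm]

theorem det_updateCol_zero_updateCol_last {r : ℕ} (M : Matrix (Fin (r + 2)) (Fin (r + 2)) R) :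
    ((M.updateCol 0 (Pi.single 0 1)).updateCol (Fin.last _) (Pi.single 1 1)).det =
      (-1) ^ r * ((M.submatrix Fin.succ Fin.succ).submatrix Fin.succ Fin.castSucc).det := by
  have hcol : (M.updateCol 0 (Pi.single 0 1)).submatrix (Fin.succAbove 1) Fin.castSucc =
      (M.submatrix (Fin.succAbove 1) Fin.castSucc).updateCol 0 (Pi.single 0 1) := by
    ext a b
    simp [updateCol_apply, Pi.single_apply, Fin.succAbove_eq_zero_iff, Fin.castSucc_eq_zero_iff]
  have hcenter : (M.submatrix (Fin.succAbove 1) Fin.castSucc).submatrix Fin.succ Fin.succ =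
      (M.submatrix Fin.succ Fin.succ).submatrix Fin.succ Fin.castSucc := by
    ext a b
    simp [Fin.one_succAbove_succ]
  rw [det_updateCol_single_one, Fin.succAbove_last, hcol, det_updateCol_single_one,
    Fin.succAbove_zero, hcenter]
  simp [show 1 + (r + 1) = r + 2 by omega, pow_add]

theorem desnanot_jacobi_s5 {r : ℕ} (M : Matrix (Fin (r + 2)) (Fin (r + 2)) R) :
    M.det * ((M.submatrix Fin.succ Fin.succ).submatrix Fin.succ Fin.castSucc).det =
      (M.submatrix Fin.succ Fin.succ).det * (M.submatrix (Fin.succAbove 1) Fin.castSucc).det -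
        (M.submatrix Fin.succ Fin.castSucc).det * (M.submatrix (Fin.succAbove 1) Fin.succ).det := by
  have h := adjugate_minor_two M (j₂ := Fin.last (r + 1)) (Fin.last_pos (n := r)).ne 0 1
  rw [det_updateCol_zero_updateCol_last, adjugate_fin_succ_eq_det_submatrix,
    adjugate_fin_succ_eq_det_submatrix, adjugate_fin_succ_eq_det_submatrix,
    adjugate_fin_succ_eq_det_submatrix] at h
  simp only [Fin.succAbove_zero, Fin.succAbove_last, Fin.val_zero, Fin.val_one, Fin.val_last] at h
  set center := ((M.submatrix Fin.succ Fin.succ).submatrix Fin.succ Fin.castSucc).det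
  set a := (M.submatrix Fin.succ Fin.succ).det
  set b := (M.submatrix (Fin.succAbove 1) Fin.castSucc).det
  set c := (M.submatrix Fin.succ Fin.castSucc).det
  set d := (M.submatrix (Fin.succAbove 1) Fin.succ).det
  have hsign : ((-1 : R) ^ r) ^ 2 = 1 := by rw [← pow_mul, mul_comm, pow_mul]; simp
  linear_combination (-(-1 : R) ^ r) * h + (a * b - c * d - M.det * center) * hsign

theorem det_eq_det_of_row_zero_eq_one {s : ℕ} (X : Matrix (Fin (s + 1)) (Fin (s + 1)) R)
    (h : ∀ j, X 0 j = 1) :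
    X.det = (of fun i j : Fin s => X i.succ j.succ - X i.succ j.castSucc).det := by
  let Y : Matrix (Fin (s + 1)) (Fin (s + 1)) R :=
    of fun i j => Fin.cases (X i 0) (fun j => X i j.succ - X i j.castSucc) j
  have hXY : X.det = Y.det :=
    det_eq_of_forall_col_eq_smul_add_pred (fun _ => 1) (fun _ => rfl) fun i j => by simp [Y]
  rw [hXY, det_succ_row_zero, Fin.sum_univ_succ]
  simp only [Fin.coe_ofNat_eq_mod, Nat.zero_mod, pow_zero, of_apply, h, sub_self, Fin.cases_zero,
    mul_one, Fin.succAbove_zero, one_mul, Fin.val_succ, Fin.cases_succ, mul_zero, zero_mul,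
    Finset.sum_const_zero, add_zero, Y]
  rfl

end Matrix

open Matrix

def casoratiMatrix {α : Type*} {k : ℕ} (f : Fin k → ℕ → α) (n : ℕ) :
    Matrix (Fin k) (Fin k) α :=
  of fun a b => f a (n + b)

section Casorati

variable {α : Type*} {k : ℕ}

theorem casoratiMatrix_submatrix_castSucc (f : Fin (k + 1) → ℕ → α) (g : Fin k → Fin (k + 1))
    (n : ℕ) : (casoratiMatrix f n).submatrix g Fin.castSucc = casoratiMatrix (f ∘ g) n :=
  rfl

theorem casoratiMatrix_submatrix_succ (f : Fin (k + 1) → ℕ → α) (g : Fin k → Fin (k + 1))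
    (n : ℕ) : (casoratiMatrix f n).submatrix g Fin.succ = casoratiMatrix (f ∘ g) (n + 1) := by
  ext a b
  simp [casoratiMatrix, add_assoc, add_comm 1]

theorem det_casoratiMatrix_cons_one (f : Fin k → ℕ → ℝ) (n : ℕ) :
    (casoratiMatrix (Fin.cons (fun _ => 1) f) n).det = (casoratiMatrix (fd ∘ f) n).det := by
  rw [det_eq_det_of_row_zero_eq_one _ fun _ => rfl]
  rfl

end Casorati

theorem fd_natCast : fd (fun t => (t : ℝ)) = fun _ => 1 := by
  ext t
  simp [fd]

theorem fd_comp_iterate_fd {ι : Type*} (u : ℕ → ℝ) (g : ι → ℕ) :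
    fd ∘ (fun t => fd^[g t] u) = fun t => fd^[g t] (fd u) := by
  funext t
  rw [Function.comp_apply, ← Function.iterate_succ_apply' fd, Function.iterate_succ_apply]

theorem Hd_eq_det_casoratiMatrix (m : ℕ) (u : ℕ → ℝ) (k n : ℕ) :
    Hd m u k n = (casoratiMatrix (fun a : Fin k => fd^[a * m] u) n).det := by
  simp [Hd, casoratiMatrix]

theorem Phi_succ_eq_det_casoratiMatrix (m : ℕ) (u : ℕ → ℝ) (k n : ℕ) :
    Phi m u (k + 1) n =
      (casoratiMatrix (Fin.cons (fun t => (t : ℝ)) fun a : Fin k => fd^[a * m] u) n).det := by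
  unfold Phi casoratiMatrix
  congr 1
  ext a b
  cases a using Fin.cases <;> simp

theorem Hd_fd_fd_mul_Hd_succ (m : ℕ) (u : ℕ → ℝ) (k n : ℕ) :
    Hd m (fd (fd u)) k n * Hd m u k (n + 1) =
      Hd m (fd u) k n * Phi m u (k + 1) (n + 1) - Hd m (fd u) k (n + 1) * Phi m u (k + 1) n := by
  set rows : Fin k → ℕ → ℝ := fun a => fd^[a * m] u
  set casoratiRows : Fin (k + 2) → ℕ → ℝ := Fin.cons (fun _ => 1) (Fin.cons (fun t => t) rows)
  have hrows : casoratiRows ∘ Fin.succAbove 1 = Fin.cons (fun _ => 1) rows := by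
    ext a
    cases a using Fin.cases <;> simp [casoratiRows, Fin.one_succAbove_succ]
  have key := desnanot_jacobi_s5 (casoratiMatrix casoratiRows n)
  simp only [casoratiMatrix_submatrix_succ, casoratiMatrix_submatrix_castSucc, hrows,
    casoratiRows, Fin.cons_comp_succ, det_casoratiMatrix_cons_one, Fin.comp_cons, fd_natCast,
    rows, fd_comp_iterate_fd] at key
  simp only [Hd_eq_det_casoratiMatrix, Phi_succ_eq_det_casoratiMatrix]
  linear_combination key

theorem stmt_5_general (m : ℕ) (S : ℕ → ℝ) (i k n : ℕ) :
    Hd m (fd^[i + 2] S) (k : ℤ) n * Hd m (fd^[i] S) (k : ℤ) (n + 1) =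
      Hd m (fd^[i + 1] S) (k : ℤ) n * Phi m (fd^[i] S) (k + 1) (n + 1) -
        Hd m (fd^[i + 1] S) (k : ℤ) (n + 1) * Phi m (fd^[i] S) (k + 1) n := by
  have h := Hd_fd_fd_mul_Hd_succ m (fd^[i] S) k n
  rwa [← Function.iterate_succ_apply' fd, ← Function.iterate_succ_apply' fd] at h

/-- For `i, k, n ≥ 0`: `H_k(Δ^{i+2}S_n) H_k(Δ^i S_{n+1})
= H_k(Δ^{i+1}S_n) Φ_{k+1}(Δ^i S_{n+1}) − H_k(Δ^{i+1}S_{n+1}) Φ_{k+1}(Δ^i S_n)`. -/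
theorem stmt_5 (m : ℕ) (hm : 1 ≤ m) (S : ℕ → ℝ) (i k n : ℕ) :
    Hd m (fd^[i + 2] S) (k : ℤ) n * Hd m (fd^[i] S) (k : ℤ) (n + 1) =
      Hd m (fd^[i + 1] S) (k : ℤ) n * Phi m (fd^[i] S) (k + 1) (n + 1) -
        Hd m (fd^[i + 1] S) (k : ℤ) (n + 1) * Phi m (fd^[i] S) (k + 1) n :=
  stmt_5_general m S i k n
end

section
/- For all integers i ≥ 0, k ≥ 1 and n ≥ 0, H_k(Δ^i S_{n+1})·H_{k−1}(Δ^{i+2} S_n) = H_k(Δ^{i+1} S_n)·Φ_k(Δ^i S_{n+1}) − H_{k−1}(Δ^{i+1} S_{n+1})·Φ_{k+1}(Δ^i S_n). -/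
/-!
Newton's forward-difference formula, applied column by column, turns each determinant of the
identity into a minor of the single array `a r s = Δ^s Δ^{rm} u_n` with `u = Δ^i S` (for `Φ`, the
array bordered by the top row `(n, 1, 0, 0, …)` of differences of `y ↦ y` at `n`), and it turns
the shift `n ↦ n + 1` into the sum over `t` of the minors that omit column `t`. The identity then
splits into one identity per omitted column `t`; for `t ≥ 2` it is the three-term Plücker relation
`D_t d_{01} = D_1 d_{0t} - D_0 d_{1t}` between the `k`-row minors `D` and the `(k - 1)`-row minors
`d` of `a`, which comes from the linear relation among the `k + 1` columns `0, …, k` of a `k`-row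
array given by Cramer's rule.
-/

open Matrix Finset

namespace HankelIdentity

lemma fd_eq_fwdDiff : fd = fwdDiff 1 := rfl

lemma fd_iterate_indicator (x s : ℕ) :
    fd^[s] (fun y => if y = x then (1 : ℝ) else 0) x = (-1) ^ s := by
  rw [fd_eq_fwdDiff, fwdDiff_iter_eq_sum_shift, sum_eq_single 0]
  · simp
  · intro k _ hk
    simp [hk]
  · simp

lemma fd_iterate_natCast_one (x : ℕ) : fd^[1] (fun y : ℕ => (y : ℝ)) x = 1 := by
  simp [fd]

lemma fd_iterate_natCast_of_two_le (x : ℕ) {s : ℕ} (hs : 2 ≤ s) :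
    fd^[s] (fun y : ℕ => (y : ℝ)) x = 0 := by
  obtain ⟨s, rfl⟩ : ∃ s', s = s' + 2 := ⟨s - 2, by omega⟩
  have hzero : fd (fun _ : ℕ => (0 : ℝ)) = fun _ => 0 := funext fun _ => sub_self 0
  have htwo : fd^[2] (fun y : ℕ => (y : ℝ)) = fun _ => 0 := funext fun y => by simp [fd]
  rw [Function.iterate_add_apply, htwo, Function.iterate_fixed hzero]

def skip (t j : ℕ) : ℕ := if j < t then j else j + 1

@[simp] lemma skip_zero : skip 0 = (· + 1) := rfl

@[simp] lemma skip_succ_zero (t : ℕ) : skip (t + 1) 0 = 0 := rfl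

@[simp] lemma skip_succ_succ (t j : ℕ) : skip (t + 1) (j + 1) = skip t j + 1 := by
  simp only [skip, Nat.add_lt_add_iff_right]
  split_ifs <;> rfl

lemma skip_strictMono (t : ℕ) : StrictMono (skip t) := by
  intro i j hij
  unfold skip
  split_ifs <;> omega

lemma coe_succAbove_eq_skip {p : ℕ} (t : Fin (p + 1)) (j : Fin p) :
    (t.succAbove j : ℕ) = skip t j := by
  unfold skip
  split_ifs with h
  · exact congrArg Fin.val (Fin.succAbove_of_castSucc_lt t j h)
  · exact congrArg Fin.val (Fin.succAbove_of_le_castSucc t j (not_lt.1 h))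

def minor (a : ℕ → ℕ → ℝ) (p : ℕ) (σ : ℕ → ℕ) : ℝ :=
  (of fun r j : Fin p => a r (σ j)).det

def consRow (e : ℕ → ℝ) (a : ℕ → ℕ → ℝ) : ℕ → ℕ → ℝ :=
  fun r s => if r = 0 then e s else a (r - 1) s

lemma minor_consRow (e : ℕ → ℝ) (a : ℕ → ℕ → ℝ) (q : ℕ) (σ : ℕ → ℕ) :
    minor (consRow e a) (q + 1) σ =
      ∑ j : Fin (q + 1), (-1) ^ (j : ℕ) * e (σ j) * minor a q (fun i => σ (skip j i)) := by
  rw [minor, det_succ_row_zero]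
  refine sum_congr rfl fun j _ => ?_
  simp [minor, consRow, submatrix, coe_succAbove_eq_skip]

lemma minor_consRow_of_eq_zero (e : ℕ → ℝ) (a : ℕ → ℕ → ℝ) {q : ℕ} {σ : ℕ → ℕ}
    (hσ : StrictMono σ) (he : ∀ s, 2 ≤ s → e s = 0) (hq : q = 0 → e (σ 1) = 0) :
    minor (consRow e a) (q + 1) σ =
      e (σ 0) * minor a q (fun j => σ (skip 0 j)) -
        e (σ 1) * minor a q (fun j => σ (skip 1 j)) := by
  set f : ℕ → ℝ := fun j => (-1) ^ j * e (σ j) * minor a q (fun i => σ (skip j i))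
  have hf : ∀ j, 2 ≤ j → f j = 0 := fun j hj => by
    simp [f, he _ (hj.trans (hσ.id_le j))]
  have hlast : f (q + 1) = 0 := by
    rcases Nat.eq_zero_or_pos q with rfl | hq1
    · simp [f, hq rfl]
    · exact hf _ (by omega)
  calc minor (consRow e a) (q + 1) σ = ∑ j ∈ range (q + 1), f j := by
        rw [minor_consRow, Fin.sum_univ_eq_sum_range f]
    _ = ∑ j ∈ range 2, f j := by
        rw [← add_zero (∑ j ∈ range (q + 1), f j), ← hlast, ← sum_range_succ]
        exact (sum_subset (range_subset_range.2 (by omega)) fun j _ hj =>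
          hf j (by simp at hj; omega)).symm
    _ = _ := by simp [f, sum_range_succ, sub_eq_add_neg]

lemma sum_neg_one_pow_mul_minor_skip_eq_zero (a : ℕ → ℕ → ℝ) {p r : ℕ} (hr : r < p) :
    ∑ s : Fin (p + 1), (-1) ^ (s : ℕ) * a r s * minor a p (skip s) = 0 := by
  have hzero : minor (consRow (a r) a) (p + 1) id = 0 :=
    det_zero_of_row_eq (i := 0) (j := ⟨r + 1, by omega⟩) (by simp [Fin.ext_iff])
      (funext fun s => by simp [consRow])
  simpa [minor_consRow] using hzero

lemma sum_neg_one_pow_mul_minor_skip_mul_eq_zero (a : ℕ → ℕ → ℝ) {q : ℕ}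
    (L : (Fin q → ℝ) →ₗ[ℝ] ℝ) :
    ∑ s : Fin (q + 2), (-1) ^ (s : ℕ) * minor a (q + 1) (skip s) * L (fun r => a r s) = 0 := by
  have hcolumns : ∑ s : Fin (q + 2),
      ((-1) ^ (s : ℕ) * minor a (q + 1) (skip s)) • (fun r : Fin q => a r s) = 0 := by
    ext r
    simpa [mul_right_comm] using
      sum_neg_one_pow_mul_minor_skip_eq_zero a (show (r : ℕ) < q + 1 by omega)
  simpa [map_sum, map_smul] using congrArg L hcolumns

lemma det_of_cons_succAbove {R : Type*} [CommRing R] {q : ℕ}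
    (N : Matrix (Fin (q + 1)) (Fin (q + 1)) R) (c : Fin (q + 1)) :
    (of fun r j => (Fin.cons (N r c) (fun j' => N r (c.succAbove j')) : Fin (q + 1) → R) j).det =
      (-1) ^ (c : ℕ) * N.det := by
  have hperm : (of fun r j => (Fin.cons (N r c) (fun j' => N r (c.succAbove j')) :
      Fin (q + 1) → R) j) = N.submatrix id c.cycleRange.symm := by
    ext r j
    cases j using Fin.cases <;> simp [Fin.cycleRange_symm_zero, Fin.cycleRange_symm_succ]
  rw [hperm, det_permute', Equiv.Perm.sign_symm, Fin.sign_cycleRange]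
  simp

lemma minor_ite_zero_skip_of_ne (a : ℕ → ℕ → ℝ) {Q s t : ℕ}
    (ht : 2 ≤ t) (htQ : t ≤ Q + 2) (hs : 2 ≤ s) (hsQ : s ≤ Q + 2) (hst : s ≠ t) :
    minor a (Q + 1) (fun j => if j = 0 then s else skip t (j + 1)) = 0 := by
  refine det_zero_of_column_eq (i := 0)
    (j := ⟨if s < t then s - 1 else s - 2, by split_ifs <;> omega⟩) ?_ fun r => ?_
  · simp only [ne_eq, Fin.ext_iff, Fin.val_zero]
    split_ifs <;> omega
  · simp only [of_apply, Fin.val_zero, if_true]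
    unfold skip
    congr 1
    split_ifs <;> omega

lemma minor_ite_zero_skip_self (a : ℕ → ℕ → ℝ) {Q c : ℕ} (hc : c ≤ Q) :
    minor a (Q + 1) (fun j => if j = 0 then c + 2 else skip (c + 2) (j + 1)) =
      (-1) ^ c * minor a (Q + 1) (· + 2) := by
  unfold minor
  rw [← det_of_cons_succAbove (of fun r j : Fin (Q + 1) => a r (j + 2)) ⟨c, by omega⟩]
  congr 1
  ext r j
  cases j using Fin.cases <;> simp [coe_succAbove_eq_skip]

lemma minor_plucker (a : ℕ → ℕ → ℝ) {q t : ℕ} (ht : 2 ≤ t) (htq : t ≤ q + 1) :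
    minor a (q + 1) (skip t) * minor a q (· + 2) =
      minor a (q + 1) (skip 1) * minor a q (fun j => skip t (j + 1)) -
        minor a (q + 1) (skip 0) * minor a q (fun j => skip t (skip 1 j)) := by
  obtain ⟨Q, rfl⟩ : ∃ Q, q = Q + 1 := ⟨q - 1, by omega⟩
  set ψ : ℕ → ℝ := fun s => minor a (Q + 1) (fun j => if j = 0 then s else skip t (j + 1))
  set f : ℕ → ℝ := fun s => (-1) ^ s * minor a (Q + 2) (skip s) * ψ s
  -- `ψ s` is linear in column `s` of `a`, so the linear relation among the columns kills
  -- `∑ f s`; of the terms with `s ≥ 2` only `s = t` survives.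
  have hrel : ∑ s ∈ range (Q + 3), f s = 0 := by
    set M : Matrix (Fin (Q + 1)) (Fin (Q + 1)) ℝ := of fun r j => a r (skip t (j + 1))
    have hψ : ∀ s, ψ s = (LinearMap.proj 0 ∘ₗ cramer M) (fun r => a r s) := by
      intro s
      simp only [LinearMap.coe_comp, Function.comp_apply, LinearMap.coe_proj,
        Function.eval, cramer_apply, ψ, minor]
      congr 1
      ext r j
      by_cases hj : j = 0 <;> simp [M, hj]
    rw [← Fin.sum_univ_eq_sum_range]
    simpa only [f, hψ] using sum_neg_one_pow_mul_minor_skip_mul_eq_zero a _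
  obtain ⟨c, rfl⟩ : ∃ c, t = c + 2 := ⟨t - 2, by omega⟩
  have hψ0 : ψ 0 = minor a (Q + 1) (fun j => skip (c + 2) (skip 1 j)) := by
    simp only [ψ]
    congr 1
    funext j
    unfold skip
    split_ifs <;> omega
  have hψ1 : ψ 1 = minor a (Q + 1) (fun j => skip (c + 2) (j + 1)) := by
    simp only [ψ]
    congr 1
    funext j
    unfold skip
    split_ifs <;> omega
  have hsign : (-1 : ℝ) ^ (c + 2) * (-1) ^ c = 1 := by
    rw [← pow_add]
    exact Even.neg_one_pow ⟨c + 1, by ring⟩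
  rw [sum_range_succ', sum_range_succ', sum_eq_single c] at hrel
  · simp only [f, hψ0, hψ1, ψ, minor_ite_zero_skip_self a (show c ≤ Q by omega)] at hrel
    linear_combination hrel - minor a (Q + 2) (skip (c + 2)) * minor a (Q + 1) (· + 2) * hsign
  · intro s hs hsc
    simp only [f, ψ, minor_ite_zero_skip_of_ne a (s := s + 1 + 1) (t := c + 2) (by omega)
      (by omega) (by omega) (by simp at hs; omega) (by omega), mul_zero]
  · intro hc
    exact absurd (mem_range.2 (by omega)) hc

lemma minor_three_term_identity (a : ℕ → ℕ → ℝ) (e : ℕ → ℝ) (he1 : e 1 = 1)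
    (he : ∀ s, 2 ≤ s → e s = 0) (q : ℕ) :
    (∑ t : Fin (q + 2), minor a (q + 1) (skip t)) * minor a q (· + 2) =
      minor a (q + 1) (· + 1) * ∑ t : Fin (q + 2), minor (consRow e a) (q + 1) (skip t) -
        (∑ t : Fin (q + 1), minor a q (fun j => skip t j + 1)) *
          minor (consRow e a) (q + 2) id := by
  have hΦ : minor (consRow e a) (q + 2) id =
      e 0 * minor a (q + 1) (· + 1) - minor a (q + 1) (skip 1) := by
    rw [minor_consRow_of_eq_zero e a strictMono_id he (by omega)]
    simp [he1]
  have hP : ∀ t : ℕ, t ≤ q + 1 → minor (consRow e a) (q + 1) (skip t) =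
      e (skip t 0) * minor a q (fun j => skip t (j + 1)) -
        e (skip t 1) * minor a q (fun j => skip t (skip 1 j)) := by
    intro t ht
    rw [minor_consRow_of_eq_zero e a (skip_strictMono t) he fun hq => he _ ?_]
    · simp
    · unfold skip
      split_ifs <;> omega
  have hzero : minor a (q + 1) (skip 0) * minor a q (· + 2) =
      minor a (q + 1) (· + 1) * minor (consRow e a) (q + 1) (skip 0) := by
    rw [hP 0 (by omega)]
    simp [he1, he]
  have hsucc : ∀ t : ℕ, t ≤ q → minor a (q + 1) (skip (t + 1)) * minor a q (· + 2) =
      minor a (q + 1) (· + 1) * minor (consRow e a) (q + 1) (skip (t + 1)) -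
        minor a q (fun j => skip t j + 1) * minor (consRow e a) (q + 2) id := by
    intro t ht
    rw [hP (t + 1) (by omega), hΦ]
    rcases Nat.eq_zero_or_pos t with rfl | ht0
    · simp [he]
      ring
    · obtain ⟨t, rfl⟩ : ∃ t', t = t' + 1 := ⟨t - 1, by omega⟩
      have hplucker := minor_plucker a (q := q) (t := t + 1 + 1) (by omega) (by omega)
      simp [he1] at hplucker ⊢
      linear_combination hplucker
  simp only [Fin.sum_univ_succ (n := q + 1), Fin.val_zero, Fin.val_succ]
  rw [add_mul, mul_add, hzero, sum_mul, mul_sum,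
    sum_congr rfl fun (t : Fin (q + 1)) _ => hsucc t (Nat.lt_succ_iff.1 t.isLt), sum_sub_distrib,
    sum_mul]
  ring

def jet (g : ℕ → ℕ → ℝ) (x : ℕ) : ℕ → ℕ → ℝ := fun r s => fd^[s] (g r) x

lemma jet_consRow (f : ℕ → ℝ) (g : ℕ → ℕ → ℝ) (x : ℕ) :
    jet (consRow f g) x = consRow (fun s => fd^[s] f x) (jet g x) := by
  ext r s
  unfold jet consRow
  split_ifs <;> rfl

lemma det_of_add_eq_minor_jet (g : ℕ → ℕ → ℝ) (x p : ℕ) :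
    (of fun r j : Fin p => g r (x + j)).det = minor (jet g x) p id := by
  have hfactor : (of fun r j : Fin p => g r (x + j)) =
      (of fun r s : Fin p => jet g x r s) * of fun s j : Fin p => ((j : ℕ).choose s : ℝ) := by
    ext r j
    have hnewton := shift_eq_sum_fwdDiff_iter 1 (g r) j x
    rw [smul_eq_mul, mul_one, ← fd_eq_fwdDiff] at hnewton
    rw [mul_apply]
    simp only [of_apply]
    rw [hnewton, Fin.sum_univ_eq_sum_range (fun s => jet g x r s * ((j : ℕ).choose s : ℝ)),
      ← sum_subset (range_subset_range.2 (by omega : (j : ℕ) + 1 ≤ p))]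
    · exact sum_congr rfl fun s _ => by simp [jet, mul_comm]
    · intro s _ hs
      simp [Nat.choose_eq_zero_of_lt (show (j : ℕ) < s by simpa using hs)]
  have hunit : (of fun s j : Fin p => ((j : ℕ).choose s : ℝ)).det = 1 := by
    rw [det_of_isUpperTriangular]
    · simp
    · intro s j h
      simp [Nat.choose_eq_zero_of_lt (show (j : ℕ) < s from h)]
  rw [hfactor, det_mul, hunit, mul_one]
  rfl

/-- Border the matrix with the indicator row of `x`: its values at `x + j` are `(1, 0, …, 0)`,
while its differences at `x` are `(-1)^s`. -/
lemma det_of_add_succ_eq_sum_minor_jet (g : ℕ → ℕ → ℝ) (x p : ℕ) :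
    (of fun r j : Fin p => g r (x + 1 + j)).det =
      ∑ t : Fin (p + 1), minor (jet g x) p (skip t) := by
  set δ : ℕ → ℝ := fun y => if y = x then 1 else 0
  calc (of fun r j : Fin p => g r (x + 1 + j)).det
      = minor (consRow (fun j => δ (x + j)) (fun r j => g r (x + j))) (p + 1) id := by
        rw [minor_consRow, Fin.sum_univ_succ, sum_eq_zero fun j _ => ?_]
        · simp [δ, minor, skip, add_assoc, add_comm 1]
        · simp [δ]
    _ = minor (jet (consRow δ g) x) (p + 1) id := by rw [← det_of_add_eq_minor_jet]; rfl
    _ = ∑ t : Fin (p + 1), minor (jet g x) p (skip t) := by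
        rw [jet_consRow, minor_consRow]
        refine sum_congr rfl fun t _ => ?_
        rw [id, fd_iterate_indicator, ← mul_pow]
        simp

def hankelRows (m : ℕ) (u : ℕ → ℝ) : ℕ → ℕ → ℝ := fun r => fd^[r * m] u

lemma Hd_natCast_eq_det (m : ℕ) (u : ℕ → ℝ) (p x : ℕ) :
    Hd m u p x = (of fun r j : Fin p => hankelRows m u r (x + j)).det := by
  rw [Hd, if_neg (by omega)]
  rfl

lemma Phi_eq_det (m : ℕ) (u : ℕ → ℝ) (p x : ℕ) :
    Phi m u p x = (of fun r j : Fin p => consRow Nat.cast (hankelRows m u) r (x + j)).det :=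
  rfl

lemma minor_jet_hankelRows_fd (m : ℕ) (u : ℕ → ℝ) (x p : ℕ) (σ : ℕ → ℕ) :
    minor (jet (hankelRows m (fd u)) x) p σ =
      minor (jet (hankelRows m u) x) p (fun j => σ j + 1) := by
  simp only [minor, jet, hankelRows, Function.iterate_succ_apply,
    (Function.Commute.iterate_self fd _).eq]

theorem Hd_mul_Hd_fd_fd (m : ℕ) (u : ℕ → ℝ) (q n : ℕ) :
    Hd m u ((q + 1 : ℕ) : ℤ) (n + 1) * Hd m (fd (fd u)) (q : ℤ) n =
      Hd m (fd u) ((q + 1 : ℕ) : ℤ) n * Phi m u (q + 1) (n + 1) -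
        Hd m (fd u) (q : ℤ) (n + 1) * Phi m u (q + 2) n := by
  simp only [Hd_natCast_eq_det, Phi_eq_det, det_of_add_succ_eq_sum_minor_jet,
    det_of_add_eq_minor_jet, jet_consRow, minor_jet_hankelRows_fd, id_eq]
  simp only [add_assoc, Nat.reduceAdd]
  exact minor_three_term_identity _ _ (fd_iterate_natCast_one n)
    (fun _ => fd_iterate_natCast_of_two_le n) q

end HankelIdentity

theorem stmt_7_general (m : ℕ) (S : ℕ → ℝ) (i k n : ℕ) (hk : 1 ≤ k) :
    Hd m (fd^[i] S) (k : ℤ) (n + 1) * Hd m (fd^[i + 2] S) ((k : ℤ) - 1) n =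
      Hd m (fd^[i + 1] S) (k : ℤ) n * Phi m (fd^[i] S) k (n + 1) -
        Hd m (fd^[i + 1] S) ((k : ℤ) - 1) (n + 1) * Phi m (fd^[i] S) (k + 1) n := by
  obtain ⟨q, rfl⟩ : ∃ q, k = q + 1 := ⟨k - 1, by omega⟩
  rw [show ((q + 1 : ℕ) : ℤ) - 1 = q by push_cast; ring, Function.iterate_succ_apply',
    Function.iterate_succ_apply']
  exact HankelIdentity.Hd_mul_Hd_fd_fd m (fd^[i] S) q n

/-- Lemma 4: for `i ≥ 0`, `k ≥ 1`, `n ≥ 0`: `H_k(Δ^i S_{n+1}) H_{k−1}(Δ^{i+2}S_n)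
= H_k(Δ^{i+1}S_n) Φ_k(Δ^i S_{n+1}) − H_{k−1}(Δ^{i+1}S_{n+1}) Φ_{k+1}(Δ^i S_n)`. -/
theorem stmt_7 (m : ℕ) (hm : 1 ≤ m) (S : ℕ → ℝ) (i k n : ℕ) (hk : 1 ≤ k) :
    Hd m (fd^[i] S) (k : ℤ) (n + 1) * Hd m (fd^[i + 2] S) ((k : ℤ) - 1) n =
      Hd m (fd^[i + 1] S) (k : ℤ) n * Phi m (fd^[i] S) k (n + 1) -
        Hd m (fd^[i + 1] S) ((k : ℤ) - 1) (n + 1) * Phi m (fd^[i] S) (k + 1) n :=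
  stmt_7_general m S i k n hk
end

section
/- Let k ≥ 1 and let S be a real number. If there exist real constants a_1, …, a_k such that S_n = S + a_1 Δ^m S_n + a_2 Δ^{2m} S_n + ⋯ + a_k Δ^{km} S_n for all n ≥ 0, then there exist real constants b_1, …, b_{km} such that S_n = S + b_1 ΔS_n + b_2 Δ^2 S_n + ⋯ + b_{km} Δ^{km} S_n for all n ≥ 0; that is, the kernel of the multistep Shanks transformation e_{k,m} is contained in the kernel of the Shanks transformation e_{km}. -/
/-! Δ^{(i+1)m} = Δ^{j+1} for `j = (i+1)m - 1`, so the relation with steps `m, 2m, …, km` is a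
relation with steps `1, …, km` whose coefficients vanish off the multiples of `m`. Indexing
`Fin (k * m)` by `Fin k × Fin m` puts these multiples at the pairs `(i, m - 1)`. -/

theorem exists_sum_mul_succ_eq_sum_mul_succ_mul {R : Type*} [Semiring R] {m : ℕ} (hm : 0 < m)
    {k : ℕ} (a : Fin k → R) :
    ∃ b : Fin (k * m) → R, ∀ f : ℕ → R,
      ∑ j : Fin (k * m), b j * f (j + 1) = ∑ i : Fin k, a i * f ((i + 1) * m) := by
  obtain ⟨m, rfl⟩ := Nat.exists_eq_add_one_of_ne_zero hm.ne'
  refine ⟨fun j => if (finProdFinEquiv.symm j).2 = Fin.last m then a (finProdFinEquiv.symm j).1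
    else 0, fun f => ?_⟩
  rw [← finProdFinEquiv.sum_comp, Fintype.sum_prod_type]
  simp only [Equiv.symm_apply_apply, ite_mul, zero_mul, Finset.sum_ite_eq', Finset.mem_univ,
    if_true, finProdFinEquiv_apply_val, Fin.val_last]
  congr! 3
  ring

theorem stmt_16_general (m : ℕ) (hm : 1 ≤ m) (S : ℕ → ℝ) (k : ℕ) (L : ℝ)
    (h : ∃ a : Fin k → ℝ, ∀ n : ℕ,
      S n = L + ∑ i : Fin k, a i * fd^[(i.val + 1) * m] S n) :
    ∃ b : Fin (k * m) → ℝ, ∀ n : ℕ,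
      S n = L + ∑ j : Fin (k * m), b j * fd^[j.val + 1] S n := by
  obtain ⟨a, ha⟩ := h
  obtain ⟨b, hb⟩ := exists_sum_mul_succ_eq_sum_mul_succ_mul hm a
  exact ⟨b, fun n => by rw [hb fun p => fd^[p] S n, ha n]⟩

/-- Corollary 1: if `S_n = L + a_1 Δ^m S_n + ⋯ + a_k Δ^{km} S_n` for all `n`
(for some constants `a_1, …, a_k`), then there exist constants `b_1, …, b_{km}` with
`S_n = L + b_1 ΔS_n + b_2 Δ^2 S_n + ⋯ + b_{km} Δ^{km} S_n` for all `n`: the kernel of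
the multistep Shanks transformation `e_{k,m}` is contained in that of `e_{km}`. -/
theorem stmt_16 (m : ℕ) (hm : 1 ≤ m) (S : ℕ → ℝ) (k : ℕ) (hk : 1 ≤ k) (L : ℝ)
    (h : ∃ a : Fin k → ℝ, ∀ n : ℕ,
      S n = L + ∑ i : Fin k, a i * fd^[(i.val + 1) * m] S n) :
    ∃ b : Fin (k * m) → ℝ, ∀ n : ℕ,
      S n = L + ∑ j : Fin (k * m), b j * fd^[j.val + 1] S n :=
  stmt_16_general m hm S k L h
end

section
/- Miura transformation to the extended discrete Lotka–Volterra equation: suppose the real numbers ε_j^{(n)} (for integers j ≥ −m and n ≥ 0) satisfy, for every k ≥ 0 and n ≥ 0, that the product ∏_{i=1}^{m} (ε_{k−m+i}^{(n+1)} − ε_{k−m+i}^{(n)}) is nonzero and ε_{k+1}^{(n)} = ε_{k−m}^{(n+1)} + [∏_{i=1}^{m} (ε_{k−m+i}^{(n+1)} − ε_{k−m+i}^{(n)})]^{−1}. Define b_j^{(n)} = ε_j^{(n+1)} − ε_j^{(n)} for j ≥ −m. Then for every integer k ≥ −m+1 and every n ≥ 0, ∏_{i=0}^{m−1} (b_{k+i}^{(n+1)})^{−1}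 − ∏_{i=0}^{m−1} (b_{k+i}^{(n)})^{−1} = b_{k+m}^{(n)} − b_{k−1}^{(n+1)} (this is the extended discrete Lotka–Volterra system, written in the variables a_{k−(m−1)/2}^{(n)} = 1/b_k^{(n)}). -/
/-!
The recursion at index `k + m - 1` says exactly that
`(∏_{i<m} b_{k+i}^{(n)})⁻¹ = ε_{k+m}^{(n)} − ε_{k−1}^{(n+1)}`.
Subtracting this identity at `n` from the one at `n + 1`, the right-hand sides combine into
`b_{k+m}^{(n)} − b_{k−1}^{(n+1)}`.
-/

theorem Finset.prod_Icc_one_eq_prod_range {M : Type*} [CommMonoid M] (f : ℕ → M) (m : ℕ) :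
    ∏ i ∈ Finset.Icc 1 m, f i = ∏ i ∈ Finset.range m, f (i + 1) := by
  rw [Finset.range_eq_Ico, Finset.prod_Ico_add', Finset.Ico_add_one_right_eq_Icc, zero_add]

theorem inv_prod_sub_eq_of_multistep_eps (m : ℕ) (eps : ℤ → ℕ → ℝ)
    (hrec : ∀ k n : ℕ, eps ((k : ℤ) + 1) n = eps ((k : ℤ) - m) (n + 1) +
        (∏ i ∈ Finset.Icc 1 m,
          (eps ((k : ℤ) - m + i) (n + 1) - eps ((k : ℤ) - m + i) n))⁻¹)
    (k : ℤ) (hk : -(m : ℤ) + 1 ≤ k) (n : ℕ) :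
    (∏ i ∈ Finset.range m, (eps (k + i) (n + 1) - eps (k + i) n))⁻¹ =
      eps (k + m) n - eps (k - 1) (n + 1) := by
  obtain ⟨K, hK⟩ : ∃ K : ℕ, (K : ℤ) = k + m - 1 := ⟨(k + m - 1).toNat, by omega⟩
  have h := hrec K n
  rw [Finset.prod_Icc_one_eq_prod_range, show (K : ℤ) + 1 = k + m by omega,
    show (K : ℤ) - m = k - 1 by omega] at h
  simp only [Nat.cast_add, Nat.cast_one, sub_add_add_cancel] at h
  linarith

theorem stmt_19_general (m : ℕ) (eps : ℤ → ℕ → ℝ)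
    (hrec : ∀ k n : ℕ,
      (∏ i ∈ Finset.Icc 1 m,
        (eps ((k : ℤ) - m + i) (n + 1) - eps ((k : ℤ) - m + i) n)) ≠ 0 ∧
      eps ((k : ℤ) + 1) n = eps ((k : ℤ) - m) (n + 1) +
        (∏ i ∈ Finset.Icc 1 m,
          (eps ((k : ℤ) - m + i) (n + 1) - eps ((k : ℤ) - m + i) n))⁻¹)
    (b : ℤ → ℕ → ℝ) (hb : ∀ (j : ℤ) (n : ℕ), b j n = eps j (n + 1) - eps j n) :
    ∀ k : ℤ, -(m : ℤ) + 1 ≤ k → ∀ n : ℕ,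
      (∏ i ∈ Finset.range m, (b (k + i) (n + 1))⁻¹) -
        (∏ i ∈ Finset.range m, (b (k + i) n)⁻¹) =
      b (k + m) n - b (k - 1) (n + 1) := by
  intro k hk n
  rw [Finset.prod_inv_distrib, Finset.prod_inv_distrib]
  simp only [hb, inv_prod_sub_eq_of_multistep_eps m eps
    (fun k n => (hrec k n).2) k hk]
  ring

/-- Miura transformation to the extended discrete Lotka–Volterra equation:
if the numbers `ε_j^{(n)}` (`j ≥ −m`) satisfy, for every `k, n ≥ 0`, that
`∏_{i=1}^m (ε_{k−m+i}^{(n+1)} − ε_{k−m+i}^{(n)})` is nonzero and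
`ε_{k+1}^{(n)} = ε_{k−m}^{(n+1)} + [∏_{i=1}^m (ε_{k−m+i}^{(n+1)} − ε_{k−m+i}^{(n)})]⁻¹`,
and `b_j^{(n)} = ε_j^{(n+1)} − ε_j^{(n)}`, then for every integer `k ≥ −m+1` and `n ≥ 0`,
`∏_{i=0}^{m−1} (b_{k+i}^{(n+1)})⁻¹ − ∏_{i=0}^{m−1} (b_{k+i}^{(n)})⁻¹
= b_{k+m}^{(n)} − b_{k−1}^{(n+1)}`
(the extended discrete Lotka–Volterra system in the variables
`a_{k−(m−1)/2}^{(n)} = 1/b_k^{(n)}`). -/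
theorem stmt_19 (m : ℕ) (hm : 1 ≤ m) (eps : ℤ → ℕ → ℝ)
    (hrec : ∀ k n : ℕ,
      (∏ i ∈ Finset.Icc 1 m,
        (eps ((k : ℤ) - m + i) (n + 1) - eps ((k : ℤ) - m + i) n)) ≠ 0 ∧
      eps ((k : ℤ) + 1) n = eps ((k : ℤ) - m) (n + 1) +
        (∏ i ∈ Finset.Icc 1 m,
          (eps ((k : ℤ) - m + i) (n + 1) - eps ((k : ℤ) - m + i) n))⁻¹)
    (b : ℤ → ℕ → ℝ) (hb : ∀ (j : ℤ) (n : ℕ), b j n = eps j (n + 1) - eps j n) :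
    ∀ k : ℤ, -(m : ℤ) + 1 ≤ k → ∀ n : ℕ,
      (∏ i ∈ Finset.range m, (b (k + i) (n + 1))⁻¹) -
        (∏ i ∈ Finset.range m, (b (k + i) n)⁻¹) =
      b (k + m) n - b (k - 1) (n + 1) :=
  stmt_19_general m eps hrec b hb
end
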